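/- Suppose the function class F is closed under the pointwise maximum with reward-class functions (for all f ∈ F, g ∈ G, π ∈ Π, the map x ↦ max(g(x), f(x,π)) belongs to F as a state-value function used inside the backup) and F is closed under the zero-reward Bellman backup T^π f(x,a) = γ E_{x'∼P₀(·|x,a)}[f(x',π)]; and suppose the true reward R ∈ G. Then for every π ∈ Π, the augmented-MDP Q-function Q̄^{π̄} is realizable in the extended class: there exist f ∈ F and g ∈ G such that Q̄^{π̄} = f̄_g, where f̄_g(x,a) = f(x,a) for real actions a at non-absorbing x, f̄_g(x, a⁺) = g(x), and f̄_g ≡ 0 on absorbing states. -/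
import Mathlib


open scoped ENNReal
open Classical

/-- Expectation of a real-valued function under a probability mass function. -/
noncomputable def pexp {σ : Type*} (p : PMF σ) (φ : σ → ℝ) : ℝ :=
  ∑' s, (p s).toReal * φ s

/-- Transition kernel of the action-augmented MDP: states `Option X` (with `none` the
absorbing state `s⁺`), actions `Option A` (with `none` the fictitious action `a⁺`).
Taking `a⁺` always transitions to `s⁺`; real actions follow the original dynamics;
`s⁺` is absorbing. -/
noncomputable def augP {X A : Type*} (P : X → A → PMF X) :
    Option X → Option A → PMF (Option X)
  | some x, some a => (P x a).map some
  | _, _ => PMF.pure none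

/-- Reward of the action-augmented MDP: reward `1` exactly when taking the fictitious
action `a⁺` at a goal state; all other rewards are `0`. -/
noncomputable def augR {X A : Type*} (G : Set X) : Option X → Option A → ℝ
  | some x, none => if x ∈ G then 1 else 0
  | _, _ => 0

/-- Extension `π̄` of a policy `π` to the augmented MDP: play the fictitious action `a⁺`
exactly on goal states, otherwise follow `π`. -/
noncomputable def extPi {X A : Type*} (G : Set X) (π : X → PMF A) :
    Option X → PMF (Option A)
  | some x => if x ∈ G then PMF.pure none else (π x).map some
  | none => PMF.pure none

lemma pexp_eq_sum {σ : Type*} [Fintype σ] (p : PMF σ) (φ : σ → ℝ) :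
    pexp p φ = ∑ s, (p s).toReal * φ s := tsum_fintype _

lemma pmf_sum_toReal {σ : Type*} [Fintype σ] (p : PMF σ) :
    ∑ s, (p s).toReal = 1 := by
  have h := p.tsum_coe
  rw [tsum_fintype] at h
  calc ∑ s, (p s).toReal = (∑ s, p s).toReal :=
        (ENNReal.toReal_sum (fun s _ => PMF.apply_ne_top p s)).symm
    _ = 1 := by rw [h]; rfl

lemma pexp_const {σ : Type*} [Fintype σ] (p : PMF σ) (c : ℝ) :
    pexp p (fun _ => c) = c := by
  rw [pexp_eq_sum, ← Finset.sum_mul, pmf_sum_toReal, one_mul]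

lemma pexp_pure {σ : Type*} [Fintype σ] (s : σ) (φ : σ → ℝ) :
    pexp (PMF.pure s) φ = φ s := by
  rw [pexp_eq_sum, Finset.sum_eq_single s]
  · simp [PMF.pure_apply]
  · intro b _ hb; simp [PMF.pure_apply, hb]
  · simp

lemma pexp_map_some {σ : Type*} [Fintype σ] (q : PMF σ) (φ : Option σ → ℝ) :
    pexp (q.map some) φ = pexp q (fun s => φ (some s)) := by
  rw [pexp_eq_sum, pexp_eq_sum, Fintype.sum_option]
  have h1 : (q.map some) none = 0 := by
    rw [PMF.map_apply]; simp
  have h2 : ∀ s, (q.map some) (some s) = q s := by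
    intro s
    rw [PMF.map_apply]
    rw [tsum_eq_single s (fun b' hb' => by simp [(Ne.symm hb' : ¬ s = b')])]
    simp
  simp [h1, h2]

lemma pexp_sub {σ : Type*} [Fintype σ] (p : PMF σ) (φ ψ : σ → ℝ) :
    pexp p (fun s => φ s - ψ s) = pexp p φ - pexp p ψ := by
  simp [pexp_eq_sum, mul_sub, Finset.sum_sub_distrib]

lemma le_pexp {σ : Type*} [Fintype σ] (p : PMF σ) (φ : σ → ℝ) (c : ℝ)
    (h : ∀ s, c ≤ φ s) : c ≤ pexp p φ := by
  calc c = ∑ s, (p s).toReal * c := by rw [← Finset.sum_mul, pmf_sum_toReal, one_mul]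
    _ ≤ ∑ s, (p s).toReal * φ s := Finset.sum_le_sum fun s _ =>
        mul_le_mul_of_nonneg_left (h s) ENNReal.toReal_nonneg
    _ = pexp p φ := (pexp_eq_sum p φ).symm

lemma abs_pexp_le {σ : Type*} [Fintype σ] (p : PMF σ) (φ : σ → ℝ) (M : ℝ)
    (h : ∀ s, |φ s| ≤ M) : |pexp p φ| ≤ M := by
  rw [pexp_eq_sum]
  calc |∑ s, (p s).toReal * φ s| ≤ ∑ s, |(p s).toReal * φ s| :=
        Finset.abs_sum_le_sum_abs _ _
    _ = ∑ s, (p s).toReal * |φ s| := by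
        simp [abs_mul, abs_of_nonneg ENNReal.toReal_nonneg]
    _ ≤ ∑ s, (p s).toReal * M := Finset.sum_le_sum fun s _ =>
        mul_le_mul_of_nonneg_left (h s) ENNReal.toReal_nonneg
    _ = M := by rw [← Finset.sum_mul, pmf_sum_toReal, one_mul]


/-- (Realizability in the extended class.) Suppose the value class `F`
contains `Q^π` for policies `π ∈ Π` (realizability), is closed under the pointwise
maximum with reward-class functions (`x ↦ max(g(x), f(x,π))` is in `F` as a state-value
function), and is closed under the zero-reward Bellman backup
`T^π f(x,a) = γ E_{x'∼P₀(·|x,a)}[f(x',π)]`; and suppose the true reward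
`R(x) = 1(x ∈ G)` belongs to `Gc`. Then for every `π ∈ Π`, the augmented-MDP Q-function
`Q̄^{π̄}` is realizable in the extended class: there are `f ∈ F` and `g ∈ Gc` such that
`Q̄^{π̄} = f̄_g` (equal to `f` on real actions at non-absorbing states, to `g` on the
fictitious action, and `0` on the absorbing state). -/
theorem stmt7 {X A : Type*} [Fintype X] [Fintype A]
    (G : Set X) (P : X → A → PMF X)
    (γ : ℝ) (hγ0 : 0 ≤ γ) (hγ1 : γ < 1)
    (F : Set (X → A → ℝ)) (Gc : Set (X → ℝ)) (Pi : Set (X → PMF A))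
    (hRG : (fun x : X => if x ∈ G then (1 : ℝ) else 0) ∈ Gc)
    (hmax : ∀ f ∈ F, ∀ g ∈ Gc, ∀ π ∈ Pi,
      (fun (x : X) (_ : A) => max (g x) (pexp (π x) (f x))) ∈ F)
    (hbackup : ∀ f ∈ F, ∀ π ∈ Pi,
      (fun (x : X) (a : A) => γ * pexp (P x a) (fun x' => pexp (π x') (f x'))) ∈ F)
    (π : X → PMF A) (hπ : π ∈ Pi)
    (Q : X → A → ℝ) (hQF : Q ∈ F)
    (hQ : ∀ x a, Q x a =
      if x ∈ G then 1 else γ * pexp (P x a) (fun x' => pexp (π x') (Q x')))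
    (Qb : Option X → Option A → ℝ)
    (hQb : ∀ ox oa, Qb ox oa =
      augR G ox oa + γ * pexp (augP P ox oa) (fun ox' => pexp (extPi G π ox') (Qb ox'))) :
    ∃ f ∈ F, ∃ g ∈ Gc,
      (∀ (x : X) (a : A), Qb (some x) (some a) = f x a) ∧
      (∀ x : X, Qb (some x) none = g x) ∧
      (∀ oa : Option A, Qb none oa = 0) := by
  classical
  have hextnone : extPi G π none = PMF.pure none := rfl
  -- absorbing state value is 0
  have hQbnn : Qb none none = 0 := by
    have h := hQb none none
    rw [show augR G none none = 0 from rfl,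
        show augP P none none = PMF.pure none from rfl,
        pexp_pure, hextnone, pexp_pure] at h
    have h2 : Qb none none * (1 - γ) = 0 := by linarith
    have h3 : (1 : ℝ) - γ ≠ 0 := by linarith
    exact (mul_eq_zero.mp h2).resolve_right h3
  have hQbnone : ∀ oa, Qb none oa = 0 := by
    intro oa
    have h := hQb none oa
    rw [show augR G none oa = 0 from by cases oa <;> rfl,
        show augP P none oa = PMF.pure none from by cases oa <;> rfl,
        pexp_pure, hextnone, pexp_pure, hQbnn] at h
    simpa using h
  -- value of fictitious action at real states
  have hQbg : ∀ x, Qb (some x) none = if x ∈ G then 1 else 0 := by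
    intro x
    have h := hQb (some x) none
    rw [show augP P (some x) none = PMF.pure none from rfl,
        pexp_pure, hextnone, pexp_pure, hQbnn] at h
    simpa [augR] using h
  -- state value at real states
  have hVs : ∀ x, pexp (extPi G π (some x)) (Qb (some x)) =
      if x ∈ G then 1 else pexp (π x) (fun a => Qb (some x) (some a)) := by
    intro x
    by_cases hx : x ∈ G
    · rw [show extPi G π (some x) = PMF.pure none from by simp [extPi, hx],
        pexp_pure, hQbg, if_pos hx, if_pos hx]
    · rw [show extPi G π (some x) = (π x).map some from by simp [extPi, hx],
        pexp_map_some, if_neg hx]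
  -- Bellman at real states, real actions
  have hQbsome : ∀ x a, Qb (some x) (some a) =
      γ * pexp (P x a) (fun x' => pexp (extPi G π (some x')) (Qb (some x'))) := by
    intro x a
    have h := hQb (some x) (some a)
    rw [show augR G (some x) (some a) = 0 from rfl,
        show augP P (some x) (some a) = (P x a).map some from rfl,
        pexp_map_some] at h
    simpa using h
  -- Q is nonnegative
  have hQpos : ∀ x a, 0 ≤ Q x a := by
    intro x a
    have hne : (Finset.univ : Finset (X × A)).Nonempty := ⟨(x, a), Finset.mem_univ _⟩
    set c := Finset.univ.inf' hne (fun p : X × A => Q p.1 p.2) with hc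
    have hcle : ∀ y b, c ≤ Q y b := fun y b =>
      Finset.inf'_le _ (Finset.mem_univ (y, b))
    obtain ⟨⟨x₀, a₀⟩, -, hmin⟩ :=
      Finset.exists_mem_eq_inf' hne (fun p : X × A => Q p.1 p.2)
    rw [← hc] at hmin
    have hc0 : 0 ≤ c := by
      by_cases hx0 : x₀ ∈ G
      · rw [hmin, hQ, if_pos hx0]; norm_num
      · by_contra hneg
        push_neg at hneg
        have hE : c ≤ pexp (P x₀ a₀) (fun x' => pexp (π x') (Q x')) :=
          le_pexp _ _ _ (fun x' => le_pexp _ _ _ (fun b => hcle x' b))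
        have hceq : c = γ * pexp (P x₀ a₀) (fun x' => pexp (π x') (Q x')) := by
          rw [hmin, hQ, if_neg hx0]
        nlinarith [hE, hceq]
    exact le_trans hc0 (hcle x a)
  -- contraction: Qb agrees with Q on non-goal states
  have hEq : ∀ x, x ∉ G → ∀ a, Qb (some x) (some a) = Q x a := by
    by_cases hS : ∃ x : X, x ∉ G
    · obtain ⟨x₁, hx₁⟩ := hS
      by_cases hA : Nonempty A
      · obtain ⟨a₁⟩ := hA
        set S : Finset (X × A) := Finset.univ.filter (fun p => p.1 ∉ G) with hSdef
        have hSne : S.Nonempty := ⟨(x₁, a₁), Finset.mem_filter.mpr ⟨Finset.mem_univ _, hx₁⟩⟩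
        set M := S.sup' hSne (fun p => |Qb (some p.1) (some p.2) - Q p.1 p.2|) with hM
        have hMle : ∀ x, x ∉ G → ∀ a, |Qb (some x) (some a) - Q x a| ≤ M := by
          intro x hx a
          rw [hM]
          exact Finset.le_sup' (f := fun p : X × A => |Qb (some p.1) (some p.2) - Q p.1 p.2|)
            (show (x, a) ∈ S from Finset.mem_filter.mpr ⟨Finset.mem_univ _, hx⟩)
        have hM0 : 0 ≤ M := le_trans (abs_nonneg _) (hMle x₁ hx₁ a₁)
        have hd : ∀ x',
            |pexp (extPi G π (some x')) (Qb (some x')) - pexp (π x') (Q x')| ≤ M := by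
          intro x'
          rw [hVs x']
          by_cases hx' : x' ∈ G
          · rw [if_pos hx']
            have h1 : pexp (π x') (Q x') = 1 := by
              have he : Q x' = fun _ => (1 : ℝ) := funext fun b => by rw [hQ, if_pos hx']
              rw [he, pexp_const]
            rw [h1]; simpa using hM0
          · rw [if_neg hx', ← pexp_sub]
            exact abs_pexp_le _ _ _ (fun a => hMle x' hx' a)
        have hMγ : M ≤ γ * M := by
          obtain ⟨⟨x₀, a₀⟩, hp, hpeq⟩ :=
            Finset.exists_mem_eq_sup' hSne (fun p => |Qb (some p.1) (some p.2) - Q p.1 p.2|)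
          have hx₀ : x₀ ∉ G := (Finset.mem_filter.mp hp).2
          have h1 : Qb (some x₀) (some a₀) - Q x₀ a₀ =
              γ * pexp (P x₀ a₀) (fun x' =>
                pexp (extPi G π (some x')) (Qb (some x')) - pexp (π x') (Q x')) := by
            rw [pexp_sub, hQbsome, hQ, if_neg hx₀]; ring
          calc M = |Qb (some x₀) (some a₀) - Q x₀ a₀| := hpeq
            _ = γ * |pexp (P x₀ a₀) (fun x' =>
                pexp (extPi G π (some x')) (Qb (some x')) - pexp (π x') (Q x'))| := by
                rw [h1, abs_mul, abs_of_nonneg hγ0]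
            _ ≤ γ * M := mul_le_mul_of_nonneg_left (abs_pexp_le _ _ _ hd) hγ0
        have hMz : M = 0 := by nlinarith
        intro x hx a
        have h := hMle x hx a
        rw [hMz] at h
        exact sub_eq_zero.mp (abs_nonpos_iff.mp h)
      · intro x hx a; exact absurd ⟨a⟩ hA
    · push_neg at hS
      intro x hx
      exact absurd (hS x) hx
  -- the state-value function equals the maxed function
  have hinner : ∀ x', pexp (extPi G π (some x')) (Qb (some x')) =
      pexp (π x') (fun _ : A =>
        max (if x' ∈ G then (1 : ℝ) else 0) (pexp (π x') (Q x'))) := by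
    intro x'
    rw [pexp_const, hVs]
    by_cases hx' : x' ∈ G
    · rw [if_pos hx', if_pos hx']
      have h1 : pexp (π x') (Q x') = 1 := by
        have he : Q x' = fun _ => (1 : ℝ) := funext fun b => by rw [hQ, if_pos hx']
        rw [he, pexp_const]
      rw [h1, max_self]
    · rw [if_neg hx', if_neg hx']
      have hE0 : (0 : ℝ) ≤ pexp (π x') (Q x') := le_pexp _ _ _ (fun b => hQpos x' b)
      rw [show (fun a => Qb (some x') (some a)) = (fun a => Q x' a) from
          funext (fun a => hEq x' hx' a), max_eq_right hE0]
  -- assemble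
  refine ⟨fun x a => γ * pexp (P x a) (fun x' =>
      pexp (π x') ((fun (x : X) (_ : A) =>
        max ((fun x : X => if x ∈ G then (1 : ℝ) else 0) x) (pexp (π x) (Q x))) x')),
    hbackup _ (hmax Q hQF _ hRG π hπ) π hπ,
    fun x : X => if x ∈ G then (1 : ℝ) else 0, hRG, ?_, ?_, hQbnone⟩
  · intro x a
    rw [hQbsome]
    exact congrArg (fun t => γ * t) (congrArg (pexp (P x a)) (funext hinner))
  · intro x
    exact hQbg x
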